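/- Fix δ ∈ (0,1). Let g_ε(t) = 2(1-ε)[(1+t²)Φ(-t) - tφ(t)] + ε(1+t²). Suppose ε* ∈ (0,1) is such that the equation g_{ε*}(t) = δ has a unique positive root t. Then for any ε ∈ (ε*, 1), g_ε(t) > δ for all t > 0, i.e., inf_{t>0} g_ε(t)/δ > 1. -/

import Mathlib

noncomputable def stdNormalPDF (x : ℝ) : ℝ := Real.exp (-x ^ 2 / 2) / Real.sqrt (2 * Real.pi)

noncomputable def stdNormalCDF (x : ℝ) : ℝ := ∫ t in Set.Iic x, stdNormalPDF t

noncomputable def gfun (ε t : ℝ) : ℝ :=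
  2 * (1 - ε) * ((1 + t ^ 2) * stdNormalCDF (-t) - t * stdNormalPDF t) + ε * (1 + t ^ 2)

/-!
For `t > 0` the map `ε ↦ g_ε(t)` is strictly increasing, because `g_ε(t)` interpolates linearly
between `h(t) = 2[(1 + t²)Φ(-t) - tφ(t)]` and `1 + t²`, and `h(t) < 1 + t²`. So it suffices that
`g_{ε*} ≥ δ` on `(0, ∞)`. If instead `g_{ε*}(t₀) < δ` for some `t₀ > 0`, then since
`g_{ε*}(0) = 1 > δ` and `g_{ε*}(t) → ∞`, the intermediate value theorem produces one root of
`g_{ε*} = δ` in `(0, t₀)` and another in `(t₀, ∞)`, contradicting uniqueness.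
-/

open MeasureTheory ProbabilityTheory Filter Set

theorem le_of_existsUnique_root {f : ℝ → ℝ} {a c : ℝ} (hf : Continuous f) (ha : c < f a)
    (htop : Tendsto f atTop atTop) (huniq : ∃! t, a < t ∧ f t = c) {t : ℝ} (ht : a < t) :
    c ≤ f t := by
  by_contra! hlt
  obtain ⟨T, hT, hcT⟩ := ((eventually_gt_atTop t).and (htop.eventually_gt_atTop c)).exists
  obtain ⟨t₁, ⟨ht₁a, ht₁t⟩, hft₁⟩ :=
    intermediate_value_Ioo' ht.le hf.continuousOn ⟨hlt, ha⟩
  obtain ⟨t₂, ⟨ht₂t, -⟩, hft₂⟩ :=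
    intermediate_value_Ioo hT.le hf.continuousOn ⟨hlt, hcT⟩
  have : t₁ = t₂ := huniq.unique ⟨ht₁a, hft₁⟩ ⟨ht.trans ht₂t, hft₂⟩
  linarith

theorem stdNormalPDF_eq_gaussianPDFReal : stdNormalPDF = gaussianPDFReal 0 1 := by
  ext x
  simp [stdNormalPDF, gaussianPDFReal, div_eq_inv_mul]

theorem stdNormalPDF_pos (x : ℝ) : 0 < stdNormalPDF x := by
  unfold stdNormalPDF; positivity

theorem stdNormalPDF_le_one (x : ℝ) : stdNormalPDF x ≤ 1 := by
  unfold stdNormalPDF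
  rw [div_le_one (by positivity)]
  calc Real.exp (-x ^ 2 / 2) ≤ 1 := Real.exp_le_one_iff.2 (by nlinarith [sq_nonneg x])
    _ ≤ Real.sqrt (2 * Real.pi) := Real.one_le_sqrt.2 (by linarith [Real.pi_gt_three])

theorem stdNormalPDF_neg (x : ℝ) : stdNormalPDF (-x) = stdNormalPDF x := by
  simp [stdNormalPDF]

theorem integrable_stdNormalPDF : Integrable stdNormalPDF := by
  rw [stdNormalPDF_eq_gaussianPDFReal]
  exact integrable_gaussianPDFReal 0 1

theorem integral_stdNormalPDF : ∫ x, stdNormalPDF x = 1 := by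
  rw [stdNormalPDF_eq_gaussianPDFReal]
  exact integral_gaussianPDFReal_eq_one 0 one_ne_zero

theorem stdNormalCDF_nonneg (x : ℝ) : 0 ≤ stdNormalCDF x :=
  integral_nonneg fun t => (stdNormalPDF_pos t).le

theorem stdNormalCDF_sub_stdNormalCDF (a b : ℝ) :
    stdNormalCDF b - stdNormalCDF a = ∫ t in a..b, stdNormalPDF t :=
  intervalIntegral.integral_Iic_sub_Iic integrable_stdNormalPDF.integrableOn
    integrable_stdNormalPDF.integrableOn

theorem stdNormalCDF_zero : stdNormalCDF 0 = 1 / 2 := by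
  have hsymm : stdNormalCDF 0 = ∫ x in Ioi 0, stdNormalPDF x := by
    simpa [stdNormalCDF, stdNormalPDF_neg] using integral_comp_neg_Iic 0 stdNormalPDF
  have htotal : stdNormalCDF 0 + ∫ x in Ioi 0, stdNormalPDF x = 1 := by
    rw [stdNormalCDF, intervalIntegral.integral_Iic_add_Ioi integrable_stdNormalPDF.integrableOn
      integrable_stdNormalPDF.integrableOn, integral_stdNormalPDF]
  linarith

theorem continuous_stdNormalCDF : Continuous stdNormalCDF := by
  have hprim : stdNormalCDF = fun x => stdNormalCDF 0 + ∫ t in 0..x, stdNormalPDF t :=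
    funext fun x => by rw [← stdNormalCDF_sub_stdNormalCDF]; ring
  rw [hprim]
  exact continuous_const.add (integrable_stdNormalPDF.continuous_primitive 0)

theorem stdNormalCDF_strictMono : StrictMono stdNormalCDF := fun a b hab => by
  rw [← sub_pos, stdNormalCDF_sub_stdNormalCDF]
  exact intervalIntegral.intervalIntegral_pos_of_pos_on
    integrable_stdNormalPDF.intervalIntegrable (fun x _ => stdNormalPDF_pos x) hab

/-- The risk `E[η(Z; t)²]` of soft thresholding `η` at level `t` when the signal is zero;
`1 + t²` is its risk as the signal tends to infinity. -/
noncomputable def softThresholdNullRisk (t : ℝ) : ℝ :=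
  2 * ((1 + t ^ 2) * stdNormalCDF (-t) - t * stdNormalPDF t)

theorem gfun_eq (ε t : ℝ) :
    gfun ε t = (1 - ε) * softThresholdNullRisk t + ε * (1 + t ^ 2) := by
  unfold gfun softThresholdNullRisk; ring

theorem continuous_softThresholdNullRisk : Continuous softThresholdNullRisk := by
  have := continuous_stdNormalCDF.comp continuous_neg
  unfold softThresholdNullRisk stdNormalPDF
  fun_prop

theorem softThresholdNullRisk_zero : softThresholdNullRisk 0 = 1 := by
  simp [softThresholdNullRisk, stdNormalCDF_zero]

theorem softThresholdNullRisk_lt {t : ℝ} (ht : 0 < t) : softThresholdNullRisk t < 1 + t ^ 2 := by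
  have hΦ : stdNormalCDF (-t) < 1 / 2 := stdNormalCDF_zero ▸ stdNormalCDF_strictMono (neg_lt_zero.2 ht)
  have hφ := stdNormalPDF_pos t
  unfold softThresholdNullRisk
  nlinarith [mul_pos ht hφ]

theorem neg_two_mul_le_softThresholdNullRisk {t : ℝ} (ht : 0 ≤ t) :
    -2 * t ≤ softThresholdNullRisk t := by
  have hΦ := stdNormalCDF_nonneg (-t)
  have hφ := stdNormalPDF_le_one t
  unfold softThresholdNullRisk
  nlinarith [mul_nonneg (by positivity : (0 : ℝ) ≤ 1 + t ^ 2) hΦ, mul_le_mul_of_nonneg_left hφ ht]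

theorem continuous_gfun (ε : ℝ) : Continuous (gfun ε) := by
  have := continuous_softThresholdNullRisk
  simp only [funext (gfun_eq ε)]
  fun_prop

theorem gfun_zero (ε : ℝ) : gfun ε 0 = 1 := by
  simp [gfun_eq, softThresholdNullRisk_zero]

theorem gfun_lt_gfun {ε₁ ε₂ t : ℝ} (ht : 0 < t) (hε : ε₁ < ε₂) : gfun ε₁ t < gfun ε₂ t := by
  have := softThresholdNullRisk_lt ht
  rw [gfun_eq, gfun_eq]
  nlinarith

theorem tendsto_gfun_atTop {ε : ℝ} (hε₀ : 0 < ε) (hε₁ : ε ≤ 1) : Tendsto (gfun ε) atTop atTop := by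
  have hquad : Tendsto (fun t => t * (ε * t - 2)) atTop atTop :=
    tendsto_id.atTop_mul_atTop₀ (tendsto_atTop_add_const_right _ _ (tendsto_id.const_mul_atTop hε₀))
  refine tendsto_atTop_mono' atTop ?_ hquad
  filter_upwards [eventually_ge_atTop 0] with t ht
  have := neg_two_mul_le_softThresholdNullRisk ht
  rw [gfun_eq]
  nlinarith

theorem above_DT_no_root_general (δ εstar : ℝ) (hδ1 : δ < 1)
    (hεs : 0 < εstar)
    (huniq : ∃! t : ℝ, 0 < t ∧ gfun εstar t = δ) :
    ∀ ε : ℝ, εstar < ε → ε < 1 → ∀ t : ℝ, 0 < t → δ < gfun ε t := by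
  intro ε hε hε1 t ht
  have hδ0 : δ < gfun εstar 0 := by rwa [gfun_zero]
  have hroot := le_of_existsUnique_root (continuous_gfun εstar) hδ0
    (tendsto_gfun_atTop hεs (by linarith)) huniq ht
  exact hroot.trans_lt (gfun_lt_gfun ht hε)

theorem above_DT_no_root (δ εstar : ℝ) (hδ : 0 < δ) (hδ1 : δ < 1)
    (hεs : 0 < εstar) (hεs1 : εstar < 1)
    (huniq : ∃! t : ℝ, 0 < t ∧ gfun εstar t = δ) :
    ∀ ε : ℝ, εstar < ε → ε < 1 → ∀ t : ℝ, 0 < t → δ < gfun ε t :=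
  above_DT_no_root_general δ εstar hδ1 hεs huniq
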